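/- Let P be an idempotent operator on a finite-dimensional inner product space H, W = im P, W* = (ker P)ᗮ. Then P = P' + π, where π is the orthogonal projection onto W ∩ W*, and P' is an idempotent with P'π = πP' = 0 whose operator P'*P' has all nonzero eigenvalues strictly greater than 1. -/

import Mathlib

/-!
Put `π` for the orthogonal projection onto `W ∩ W*` and `Q := P - π`. Since `π` is a
subprojection of `P` on both sides (`Pπ = π = πP`), `Q` is an idempotent killed by `π` on
both sides. If `Q*Q x = μ x` with `μ ≠ 0`, then `x` lies in the range of the idempotent `Q*`,
so `Q* x = x`, and expanding the square gives `‖Q x - x‖² = (μ - 1) ‖x‖²`; hence `μ ≥ 1`.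
If `μ = 1`, then `x` is fixed by `Q` and by `Q*`, hence `π x = π Q x = 0` and `x` is fixed
by `P` and by `P*`. Such an `x` lies in `W ∩ W*`, so `x = π x = 0`.
-/

open scoped InnerProductSpace

open LinearMap

section

variable {𝕜 E : Type*} [RCLike 𝕜] [NormedAddCommGroup E] [InnerProductSpace 𝕜 E]

section Adjoint

variable [FiniteDimensional 𝕜 E] {T : E →ₗ[𝕜] E} {x : E}

lemma LinearMap.mem_range_inf_orthogonal_ker_of_apply_eq_self (hTx : T x = x)
    (hTx' : adjoint T x = x) : x ∈ range T ⊓ (ker T)ᗮ :=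
  ⟨⟨x, hTx⟩, fun u hu => by rw [← hTx', adjoint_inner_right, mem_ker.mp hu, inner_zero_left]⟩

lemma LinearMap.norm_apply_sub_sq_of_adjoint_apply_eq_self (hTx' : adjoint T x = x) {μ : ℝ}
    (hx : adjoint T (T x) = (μ : 𝕜) • x) : ‖T x - x‖ ^ 2 = (μ - 1) * ‖x‖ ^ 2 := by
  have hcross : ⟪T x, x⟫_𝕜 = (‖x‖ ^ 2 : ℝ) := by
    rw [← adjoint_inner_right, hTx', inner_self_eq_norm_sq_to_K]; norm_cast
  have hnorm : ‖T x‖ ^ 2 = μ * ‖x‖ ^ 2 := by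
    have h : ⟪T x, T x⟫_𝕜 = μ * ‖x‖ ^ 2 := by
      rw [← adjoint_inner_right, hx, inner_smul_right, inner_self_eq_norm_sq_to_K]
    rw [inner_self_eq_norm_sq_to_K] at h
    exact_mod_cast h
  rw [norm_sub_sq (𝕜 := 𝕜), hcross, RCLike.ofReal_re, hnorm]
  ring

lemma LinearMap.isIdempotentElem_adjoint (hT : IsIdempotentElem T) :
    IsIdempotentElem (adjoint T) := by
  simpa only [star_eq_adjoint] using hT.star

lemma LinearMap.IsIdempotentElem.adjoint_apply_eq_self_of_adjoint_apply_apply_eq_smul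
    (hT : IsIdempotentElem T) {μ : 𝕜} (hμ : μ ≠ 0) (hx : adjoint T (T x) = μ • x) :
    adjoint T x = x :=
  (isIdempotentElem_adjoint hT).mem_range_iff.mp
    ⟨μ⁻¹ • T x, by rw [map_smul, hx, inv_smul_smul₀ hμ]⟩

lemma LinearMap.IsIdempotentElem.one_le_of_hasEigenvector_adjoint_comp_self
    (hT : IsIdempotentElem T) {μ : ℝ} (hμ : μ ≠ 0)
    (hx : Module.End.HasEigenvector (adjoint T ∘ₗ T) (μ : 𝕜) x) : 1 ≤ μ := by
  have hTx : adjoint T (T x) = (μ : 𝕜) • x := hx.apply_eq_smul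
  have h := norm_apply_sub_sq_of_adjoint_apply_eq_self
    (hT.adjoint_apply_eq_self_of_adjoint_apply_apply_eq_smul (RCLike.ofReal_ne_zero.mpr hμ) hTx)
    hTx
  have hxpos : 0 < ‖x‖ ^ 2 := pow_pos (norm_pos_iff.mpr hx.2) 2
  nlinarith [sq_nonneg ‖T x - x‖]

lemma LinearMap.IsIdempotentElem.apply_eq_self_of_adjoint_apply_apply_eq_self
    (hT : IsIdempotentElem T) (hx : adjoint T (T x) = x) : T x = x ∧ adjoint T x = x := by
  have hTx' := hT.adjoint_apply_eq_self_of_adjoint_apply_apply_eq_smul one_ne_zero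
    (by rwa [one_smul])
  have h := norm_apply_sub_sq_of_adjoint_apply_eq_self hTx' (μ := 1) (by simpa using hx)
  rw [sub_self, zero_mul, sq_eq_zero_iff, norm_eq_zero, sub_eq_zero] at h
  exact ⟨h, hTx'⟩

end Adjoint

section Projection

variable {P : E →ₗ[𝕜] E} {K : Submodule 𝕜 E} [K.HasOrthogonalProjection]

lemma LinearMap.IsIdempotentElem.comp_starProjection_of_le_range (hP : IsIdempotentElem P)
    (hK : K ≤ range P) : P ∘ₗ (K.starProjection : E →ₗ[𝕜] E) = K.starProjection :=
  (hP.comp_eq_right_iff _).mpr (by simpa using hK)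

lemma LinearMap.IsIdempotentElem.starProjection_comp_of_le_orthogonal_ker
    (hP : IsIdempotentElem P) (hK : K ≤ (ker P)ᗮ) :
    (K.starProjection : E →ₗ[𝕜] E) ∘ₗ P = K.starProjection :=
  (hP.comp_eq_left_iff _).mpr
    (by simpa using (ker P).le_orthogonal_orthogonal.trans (Submodule.orthogonal_le hK))

lemma LinearMap.IsIdempotentElem.eq_zero_of_sub_starProjection_apply_eq_self
    [FiniteDimensional 𝕜 E] (hP : IsIdempotentElem P) (hK : K ≤ (ker P)ᗮ)
    (hK' : range P ⊓ (ker P)ᗮ ≤ K) {x : E} (hx : (P - (K.starProjection : E →ₗ[𝕜] E)) x = x)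
    (hx' : adjoint (P - (K.starProjection : E →ₗ[𝕜] E)) x = x) : x = 0 := by
  have hπx : K.starProjection x = 0 := by
    have h := congr($(hP.starProjection_comp_of_le_orthogonal_ker hK) x)
    rw [← hx, sub_apply, map_sub, ContinuousLinearMap.coe_coe, ← mul_apply_eq_comp,
      K.isIdempotentElem_starProjection.eq]
    simpa [sub_eq_zero] using h
  have hPx : P x = x := by simpa [hπx] using hx
  have hP'x : adjoint P x = x := by
    simpa [K.starProjection_isSymmetric.adjoint_eq, hπx] using hx'
  rw [← Submodule.starProjection_eq_self_iff.mpr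
    (hK' (mem_range_inf_orthogonal_ker_of_apply_eq_self hPx hP'x)), hπx]

end Projection

end

theorem stmt_6 {𝕜 E : Type*} [RCLike 𝕜] [NormedAddCommGroup E]
    [InnerProductSpace 𝕜 E] [FiniteDimensional 𝕜 E]
    (P : E →ₗ[𝕜] E) (hP : P ∘ₗ P = P) :
    ∃ P' : E →ₗ[𝕜] E,
      let W : Submodule 𝕜 E := LinearMap.range P ⊓ (LinearMap.ker P)ᗮ
      let π : E →ₗ[𝕜] E := W.subtype ∘ₗ (W.orthogonalProjectionOnto).toLinearMap
      P = P' + π ∧ P' ∘ₗ P' = P' ∧ P' ∘ₗ π = 0 ∧ π ∘ₗ P' = 0 ∧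
      (∀ μ : ℝ, μ ≠ 0 →
        Module.End.HasEigenvalue ((LinearMap.adjoint P') ∘ₗ P') ((μ : ℝ) : 𝕜) →
        1 < μ) := by
  set W : Submodule 𝕜 E := range P ⊓ (ker P)ᗮ
  set π : E →ₗ[𝕜] E := (W.starProjection : E →ₗ[𝕜] E)
  have hP : IsIdempotentElem P := hP
  have hπ : IsIdempotentElem π :=
    ContinuousLinearMap.IsIdempotentElem.toLinearMap W.isIdempotentElem_starProjection
  have hPπ : P * π = π := hP.comp_starProjection_of_le_range inf_le_left
  have hπP : π * P = π := hP.starProjection_comp_of_le_orthogonal_ker inf_le_right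
  have hQ : IsIdempotentElem (P - π) := hπ.sub hP hπP hPπ
  have hQπ : (P - π) * π = 0 := by rw [sub_mul, hPπ, hπ.eq, sub_self]
  have hπQ : π * (P - π) = 0 := by rw [mul_sub, hπP, hπ.eq, sub_self]
  refine ⟨P - π, (sub_add_cancel _ _).symm, hQ.eq, hQπ, hπQ, fun μ hμ hev => ?_⟩
  obtain ⟨x, hx⟩ := hev.exists_hasEigenvector
  refine (hQ.one_le_of_hasEigenvector_adjoint_comp_self hμ hx).lt_of_ne ?_
  rintro rfl
  obtain ⟨hQx, hQ'x⟩ :=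
    hQ.apply_eq_self_of_adjoint_apply_apply_eq_self (by simpa using hx.apply_eq_smul)
  exact hx.2 (hP.eq_zero_of_sub_starProjection_apply_eq_self inf_le_right le_rfl hQx hQ'x)
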